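/- If T proves u(x) = v(x), then the interpretation I : T0 → T is not conservative: T proves Ī(l(x1,x2)) = Ī(r(x1,x2)) while T0 does not prove l(x1,x2) = r(x1,x2). -/

import Mathlib

/-- Terms of the theory `T0` with three binary symbols `l`, `r`, `m`,
in context `x_1, ..., x_n`. -/
inductive Tm0 : ℕ → Type
  | var {n} : Fin n → Tm0 n
  | l {n} : Tm0 n → Tm0 n → Tm0 n
  | r {n} : Tm0 n → Tm0 n → Tm0 n
  | m {n} : Tm0 n → Tm0 n → Tm0 n

/-- Equational provability in `T0`, whose single axiom is `l(x1,x2) = r(x2,x1)`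
(closed under all substitution instances and congruence). -/
inductive Prov0 : {n : ℕ} → Tm0 n → Tm0 n → Prop
  | refl {n} (t : Tm0 n) : Prov0 t t
  | symm {n} {s t : Tm0 n} : Prov0 s t → Prov0 t s
  | trans {n} {s t w : Tm0 n} : Prov0 s t → Prov0 t w → Prov0 s w
  | congl {n} {a a' b b' : Tm0 n} : Prov0 a a' → Prov0 b b' → Prov0 (.l a b) (.l a' b')
  | congr_ {n} {a a' b b' : Tm0 n} : Prov0 a a' → Prov0 b b' → Prov0 (.r a b) (.r a' b')
  | congm {n} {a a' b b' : Tm0 n} : Prov0 a a' → Prov0 b b' → Prov0 (.m a b) (.m a' b')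
  | ax {n} (a b : Tm0 n) : Prov0 (.l a b) (.r b a)

/-- The left-to-right list of variable occurrences of a term of `T0`. -/
def varList0 {n} : Tm0 n → List (Fin n)
  | .var i => [i]
  | .l a b => varList0 a ++ varList0 b
  | .r a b => varList0 a ++ varList0 b
  | .m a b => varList0 a ++ varList0 b

/-- A term in context `x_1, ..., x_n` is linear-regular if every variable occurs exactly once. -/
def LinReg0 {n} (t : Tm0 n) : Prop := ∀ i : Fin n, (varList0 t).count i = 1

/-- Substitution of variables along a map of variables (`t(x_{σ(1)},...,x_{σ(n)})`). -/
def rename0 {n} (σ : Fin n → Fin n) : Tm0 n → Tm0 n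
  | .var i => .var (σ i)
  | .l a b => .l (rename0 σ a) (rename0 σ b)
  | .r a b => .r (rename0 σ a) (rename0 σ b)
  | .m a b => .m (rename0 σ a) (rename0 σ b)

/-- Terms of the theory `T`: unary symbols `g x` for each letter `x` of the alphabet `Fin N`,
an extra unary symbol `al` (written α), and a binary symbol `m`, in context `x_1, ..., x_n`. -/
inductive TmT (N : ℕ) : ℕ → Type
  | var {n} : Fin n → TmT N n
  | g {n} : Fin N → TmT N n → TmT N n
  | al {n} : TmT N n → TmT N n
  | m {n} : TmT N n → TmT N n → TmT N n

/-- A word `w` over the alphabet applied to a term as a composite of unary symbols. -/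
def wApp {N n : ℕ} (w : List (Fin N)) (t : TmT N n) : TmT N n :=
  w.foldr (fun x s => TmT.g x s) t

/-- Equational provability in the theory `T` with axioms `u_i(x1) = v_i(x1)` (for `i : Fin M`,
where `u_i = ur i`, `v_i = vr i`) and `m(uα(x1), x2) = m(vα(x2), x1)`, closed under
all substitution instances and congruence. -/
inductive ProvT {N : ℕ} (M : ℕ) (ur vr : Fin M → List (Fin N)) (u v : List (Fin N)) :
    {n : ℕ} → TmT N n → TmT N n → Prop
  | refl {n} (t : TmT N n) : ProvT M ur vr u v t t
  | symm {n} {s t : TmT N n} : ProvT M ur vr u v s t → ProvT M ur vr u v t s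
  | trans {n} {s t w : TmT N n} :
      ProvT M ur vr u v s t → ProvT M ur vr u v t w → ProvT M ur vr u v s w
  | congg {n} (x : Fin N) {s t : TmT N n} :
      ProvT M ur vr u v s t → ProvT M ur vr u v (.g x s) (.g x t)
  | congal {n} {s t : TmT N n} : ProvT M ur vr u v s t → ProvT M ur vr u v (.al s) (.al t)
  | congm {n} {a a' b b' : TmT N n} : ProvT M ur vr u v a a' → ProvT M ur vr u v b b' →
      ProvT M ur vr u v (.m a b) (.m a' b')
  | axu {n} (i : Fin M) (t : TmT N n) : ProvT M ur vr u v (wApp (ur i) t) (wApp (vr i) t)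
  | axm {n} (t₁ t₂ : TmT N n) :
      ProvT M ur vr u v (.m (wApp u (.al t₁)) t₂) (.m (wApp v (.al t₂)) t₁)

/-- The extension `Ī` to all terms of the interpretation `I : T0 → T` given by
`l ↦ m(uα(x1),x2)`, `r ↦ m(vα(x1),x2)`, `m ↦ m(x1,x2)`. -/
def ITerm {N : ℕ} (u v : List (Fin N)) : {n : ℕ} → Tm0 n → TmT N n
  | _, .var i => .var i
  | _, .l a b => .m (wApp u (.al (ITerm u v a))) (ITerm u v b)
  | _, .r a b => .m (wApp v (.al (ITerm u v a))) (ITerm u v b)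
  | _, .m a b => .m (ITerm u v a) (ITerm u v b)

/-! Substituting `α(x₁)` for `x` in `u(x) = v(x)` and applying `m(-, x₂)` gives
`Ī(l(x₁,x₂)) = Ī(r(x₁,x₂))`. On the other side, reading the variables of a term of `T0`
from left to right, but with the two arguments of `r` swapped, is invariant under the axiom of
`T0`; it reads `x₁x₂` on `l(x₁,x₂)` and `x₂x₁` on `r(x₁,x₂)`. -/

def substT {N n n' : ℕ} (σ : Fin n → TmT N n') : TmT N n → TmT N n'
  | .var i => σ i
  | .g x t => .g x (substT σ t)
  | .al t => .al (substT σ t)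
  | .m a b => .m (substT σ a) (substT σ b)

theorem substT_wApp {N n n' : ℕ} (σ : Fin n → TmT N n') (w : List (Fin N)) (t : TmT N n) :
    substT σ (wApp w t) = wApp w (substT σ t) := by
  induction w with
  | nil => rfl
  | cons x w ih => exact congrArg (TmT.g x) ih

namespace ProvT

variable {N M : ℕ} {ur vr : Fin M → List (Fin N)} {u v : List (Fin N)}

theorem substT {n n' : ℕ} (σ : Fin n → TmT N n') {s t : TmT N n}
    (h : ProvT M ur vr u v s t) : ProvT M ur vr u v (substT σ s) (substT σ t) := by
  induction h with
  | refl t => exact .refl _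
  | symm _ ih => exact .symm ih
  | trans _ _ ih₁ ih₂ => exact .trans ih₁ ih₂
  | congg x _ ih => exact .congg x ih
  | congal _ ih => exact .congal ih
  | congm _ _ ih₁ ih₂ => exact .congm ih₁ ih₂
  | axu i t => rw [substT_wApp, substT_wApp]; exact .axu i _
  | axm t₁ t₂ =>
    change ProvT M ur vr u v (.m (_root_.substT σ (wApp u (.al t₁))) _)
      (.m (_root_.substT σ (wApp v (.al t₂))) _)
    rw [substT_wApp, substT_wApp]
    exact .axm _ _

theorem wApp_of_var {w w' : List (Fin N)}
    (h : ProvT M ur vr u v (wApp w (TmT.var (0 : Fin 1))) (wApp w' (TmT.var 0)))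
    {n : ℕ} (t : TmT N n) : ProvT M ur vr u v (wApp w t) (wApp w' t) := by
  simpa only [substT_wApp, _root_.substT] using h.substT (fun _ => t)

theorem ITerm_l_r (h : ProvT M ur vr u v (wApp u (TmT.var (0 : Fin 1))) (wApp v (TmT.var 0)))
    {n : ℕ} (a b : Tm0 n) :
    ProvT M ur vr u v (ITerm u v (.l a b)) (ITerm u v (.r a b)) := by
  rw [ITerm, ITerm]
  exact .congm (h.wApp_of_var _) (.refl _)

end ProvT

def swapYield0 {n : ℕ} : Tm0 n → List (Fin n)
  | .var i => [i]
  | .l a b => swapYield0 a ++ swapYield0 b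
  | .r a b => swapYield0 b ++ swapYield0 a
  | .m a b => swapYield0 a ++ swapYield0 b

theorem Prov0.swapYield0_eq {n : ℕ} {s t : Tm0 n} (h : Prov0 s t) :
    swapYield0 s = swapYield0 t := by
  induction h with
  | refl t => rfl
  | symm _ ih => exact ih.symm
  | trans _ _ ih₁ ih₂ => exact ih₁.trans ih₂
  | congl _ _ ih₁ ih₂ | congr_ _ _ ih₁ ih₂ | congm _ _ ih₁ ih₂ => simp only [swapYield0, ih₁, ih₂]
  | ax a b => rfl

theorem not_Prov0_l_r_of_swapYield0_ne {n : ℕ} {a b : Tm0 n}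
    (hab : swapYield0 a ++ swapYield0 b ≠ swapYield0 b ++ swapYield0 a) :
    ¬ Prov0 (.l a b) (.r a b) :=
  fun hp => hab hp.swapYield0_eq

theorem I_not_conservative {N M : ℕ} (ur vr : Fin M → List (Fin N)) (u v : List (Fin N))
    (h : ProvT M ur vr u v (wApp u (TmT.var (0 : Fin 1))) (wApp v (TmT.var 0))) :
    ProvT M ur vr u v
      (ITerm u v (Tm0.l (Tm0.var (0 : Fin 2)) (Tm0.var 1)))
      (ITerm u v (Tm0.r (Tm0.var (0 : Fin 2)) (Tm0.var 1))) ∧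
    ¬ Prov0 (Tm0.l (Tm0.var (0 : Fin 2)) (Tm0.var 1)) (Tm0.r (Tm0.var (0 : Fin 2)) (Tm0.var 1)) := by
  exact ⟨h.ITerm_l_r _ _, not_Prov0_l_r_of_swapYield0_ne (by decide)⟩
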